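/- Let 𝒢 be a mutant-biased fitness graph and k ≥ 1 a budget. Let S_gr be any seed set of size k produced by the greedy algorithm, i.e., S₀ = ∅ and for i = 0,…,k−1, S_{i+1} = S_i ∪ {u_i} where u_i maximizes fp_𝒢(S_i ∪ {u}) over all u ∈ V, with S_gr = S_k. Then fp_𝒢(S_gr) ≥ (1 − 1/e) · max{ fp_𝒢(S) : S ⊆ V, |S| ≤ k }. -/

import Mathlib

open Finset
open scoped Classical

/-- A fitness graph: a finite strongly connected weighted directed graph together with
mutant and resident fitness functions. `w u v > 0` encodes that `(u,v)` is an edge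
of non-zero weight; `w u ·` is a probability distribution. -/
structure FitnessGraph (V : Type) [Fintype V] [DecidableEq V] where
  w : V → V → ℝ
  m : V → ℝ
  r : V → ℝ
  w_nonneg : ∀ u v, 0 ≤ w u v
  w_rowsum : ∀ u, ∑ v, w u v = 1
  strongly_connected : ∀ u v : V, Relation.ReflTransGen (fun a b => 0 < w a b) u v
  m_pos : ∀ u, 0 < m u
  r_pos : ∀ u, 0 < r u

variable {V : Type} [Fintype V] [DecidableEq V]

/-- A fitness graph is mutant-biased if `m(u) ≥ r(u)` for every node `u`. -/
def FitnessGraph.MutantBiased (G : FitnessGraph V) : Prop :=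
  ∀ u, G.r u ≤ G.m u

/-- The (out-)degree of a node: the number of neighbors along edges of non-zero weight. -/
noncomputable def FitnessGraph.deg (G : FitnessGraph V) (u : V) : ℕ :=
  (Finset.univ.filter fun v => 0 < G.w u v).card

/-- A fitness graph is undirected if its edge relation is symmetric and the weights
are uniform: `w(u,v) = 1/d(u)` for every edge `(u,v)`. -/
def FitnessGraph.Undirected (G : FitnessGraph V) : Prop :=
  (∀ u v, 0 < G.w u v → 0 < G.w v u) ∧
  ∀ u v, 0 < G.w u v → G.w u v = 1 / (G.deg u : ℝ)

/-- The fitness of node `u` in configuration `X`: `m(u)` if `u` is a mutant, `r(u)` otherwise. -/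
def FitnessGraph.fit (G : FitnessGraph V) (X : Finset V) (u : V) : ℝ :=
  if u ∈ X then G.m u else G.r u

/-- Total population fitness in configuration `X`. -/
def FitnessGraph.totalFit (G : FitnessGraph V) (X : Finset V) : ℝ :=
  ∑ u, G.fit X u

/-- The configuration resulting from `X` when `u` reproduces and replaces `v`. -/
def moranNext (X : Finset V) (u v : V) : Finset V :=
  if u ∈ X then insert v X else X.erase v

/-- One-step transition probability of the Heterogeneous Moran process. -/
noncomputable def FitnessGraph.step (G : FitnessGraph V) (X Y : Finset V) : ℝ :=
  ∑ u, ∑ v, (G.fit X u / G.totalFit X) * G.w u v * (if moranNext X u v = Y then 1 else 0)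

/-- `t`-step transition probability of the Heterogeneous Moran process. -/
noncomputable def FitnessGraph.stepN (G : FitnessGraph V) : ℕ → Finset V → Finset V → ℝ
  | 0, X, Y => if X = Y then 1 else 0
  | t + 1, X, Y => ∑ Z, FitnessGraph.stepN G t X Z * G.step Z Y

/-- Fixation probability: the probability that, started from seed set `S`, the process
eventually reaches the all-mutant configuration `V`; since `V` is absorbing this equals
`⨆ t, P(X_t = V)`. -/
noncomputable def FitnessGraph.fp (G : FitnessGraph V) (S : Finset V) : ℝ :=
  ⨆ t : ℕ, G.stepN t S Finset.univ

open Filter Topology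

/-!
The fixation probability `fp` is monotone and submodular, so the bound of Nemhauser, Wolsey and
Fisher for greedy maximization applies.

Submodularity, in the form `fp (A ∪ B) + fp I ≤ fp A + fp B` for `I ⊆ A ∩ B`, comes from a
coupling. Uniformize the process so that every node fires at rate `m u` in every configuration:
at rate `r u` it reproduces as usual, at the extra rate `m u - r u ≥ 0` only if it is a mutant.
Both kinds of moves commute with unions, so the inequality with `fp` on the left and the value
iteration from above on the right survives every step of the iteration. The iteration decreases
to a fixed point of the uniformized operator with the boundary values of `fp`, and strong
connectivity gives a maximum principle that identifies this fixed point with `fp`.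
-/

lemma Matrix.pow_row_eq_one_row {n R : Type*} [Fintype n] [DecidableEq n] [Semiring R]
    {M : Matrix n n R} {i : n} (h : M i = (1 : Matrix n n R) i) (t : ℕ) :
    (M ^ t) i = (1 : Matrix n n R) i := by
  induction t with
  | zero => rfl
  | succ t ih =>
    funext j
    rw [pow_succ', Matrix.mul_apply]
    simp only [h, ← Matrix.mul_apply, Matrix.one_mul, ih]

section Greedy

variable {α : Type*} [DecidableEq α] {f : Finset α → ℝ}

lemma le_add_sum_insert_sub (hsub : ∀ A B, f (A ∪ B) + f (A ∩ B) ≤ f A + f B)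
    (X T : Finset α) : f (X ∪ T) ≤ f X + ∑ u ∈ T, (f (insert u X) - f X) := by
  induction T using Finset.induction_on with
  | empty => simp
  | insert a T ha ih =>
    have h := hsub (insert a X) (X ∪ T)
    rw [show insert a X ∪ (X ∪ T) = X ∪ insert a T by ext; simp,
      show insert a X ∩ (X ∪ T) = X by ext x; by_cases x = a <;> simp_all] at h
    rw [sum_insert ha]
    linarith

lemma gap_after_greedy_step_le (hmono : Monotone f)
    (hsub : ∀ A B, f (A ∪ B) + f (A ∩ B) ≤ f A + f B)
    {k : ℕ} (hk : 0 < k) {X T : Finset α} (hT : T.card ≤ k) {u : α}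
    (hu : ∀ v, f (insert v X) ≤ f (insert u X)) :
    f T - f (insert u X) ≤ (1 - 1 / k) * (f T - f X) := by
  have hgain : 0 ≤ f (insert u X) - f X := sub_nonneg.2 (hmono (subset_insert u X))
  have hsum : ∑ v ∈ T, (f (insert v X) - f X) ≤ k * (f (insert u X) - f X) :=
    calc _ ≤ ∑ v ∈ T, (f (insert u X) - f X) := sum_le_sum fun v _ => by linarith [hu v]
      _ = T.card * (f (insert u X) - f X) := by rw [sum_const, nsmul_eq_mul]
      _ ≤ k * (f (insert u X) - f X) := mul_le_mul_of_nonneg_right (by exact_mod_cast hT) hgain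
  have hgap : (f T - f X) / k ≤ f (insert u X) - f X := by
    rw [div_le_iff₀' (by exact_mod_cast hk)]
    linarith [hmono (subset_union_right : T ⊆ X ∪ T), le_add_sum_insert_sub hsub X T]
  calc _ ≤ (f T - f X) - (f T - f X) / k := by linarith
    _ = _ := by ring

theorem greedy_approx_of_monotone_submodular (hmono : Monotone f)
    (hsub : ∀ A B, f (A ∪ B) + f (A ∩ B) ≤ f A + f B)
    {k : ℕ} (hk : 1 ≤ k) {S : ℕ → Finset α} (hS0 : S 0 = ∅)
    (hgreedy : ∀ i < k, ∃ u, (∀ v, f (insert v (S i)) ≤ f (insert u (S i))) ∧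
      S (i + 1) = insert u (S i))
    {T : Finset α} (hT : T.card ≤ k) :
    (1 - 1 / Real.exp 1) * (f T - f ∅) ≤ f (S k) - f ∅ := by
  have hratio : 0 ≤ 1 - 1 / (k : ℝ) :=
    sub_nonneg.2 (div_le_one_of_le₀ (by exact_mod_cast hk) (Nat.cast_nonneg k))
  have hdecay : ∀ i ≤ k, f T - f (S i) ≤ (1 - 1 / k) ^ i * (f T - f ∅) := by
    intro i hi
    induction i with
    | zero => simp [hS0]
    | succ i ih =>
      obtain ⟨u, hu, hS⟩ := hgreedy i hi
      rw [hS, pow_succ', mul_assoc]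
      exact (gap_after_greedy_step_le hmono hsub hk hT hu).trans
        (mul_le_mul_of_nonneg_left (ih (by omega)) hratio)
  have hexp : (1 - 1 / k : ℝ) ^ k ≤ 1 / Real.exp 1 := by
    simpa [Real.exp_neg] using Real.one_sub_div_pow_le_exp_neg (n := k) (t := 1)
      (by exact_mod_cast hk)
  have hopt : 0 ≤ f T - f ∅ := sub_nonneg.2 (hmono (empty_subset T))
  linarith [hdecay k le_rfl, mul_le_mul_of_nonneg_right hexp hopt]

end Greedy

def SubmodularBelow {α : Type*} [DecidableEq α] (φ ψ : Finset α → ℝ) : Prop :=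
  ∀ ⦃A B I : Finset α⦄, I ⊆ A ∩ B → φ (A ∪ B) + φ I ≤ ψ A + ψ B

namespace SubmodularBelow

variable {α : Type*} [DecidableEq α] {φ ψ : Finset α → ℝ}

lemma comp (h : SubmodularBelow φ ψ) {N : Finset α → Finset α}
    (hN : ∀ A B, N (A ∪ B) = N A ∪ N B) : SubmodularBelow (φ ∘ N) (ψ ∘ N) := by
  have hmono : Monotone N := fun X Y hXY => by
    rw [← union_eq_right.2 hXY, hN]
    exact subset_union_left
  intro A B I hI
  simpa only [Function.comp_apply, hN] using
    h (subset_inter (hmono (hI.trans inter_subset_left)) (hmono (hI.trans inter_subset_right)))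

lemma monotone (h : SubmodularBelow φ φ) : Monotone φ := fun X Y hXY => by
  have := h (subset_inter hXY hXY)
  rw [union_self] at this
  linarith

lemma union_add_inter_le (h : SubmodularBelow φ φ) (A B : Finset α) :
    φ (A ∪ B) + φ (A ∩ B) ≤ φ A + φ B :=
  h subset_rfl

end SubmodularBelow

def mutantNext {α : Type} [DecidableEq α] (X : Finset α) (u v : α) : Finset α :=
  if u ∈ X then insert v X else X

lemma moranNext_union {α : Type} [DecidableEq α] (A B : Finset α) (u v : α) :
    moranNext (A ∪ B) u v = moranNext A u v ∪ moranNext B u v := by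
  unfold moranNext
  by_cases hA : u ∈ A <;> by_cases hB : u ∈ B <;> simp [hA, hB] <;> ext <;> simp <;> tauto

lemma mutantNext_union {α : Type} [DecidableEq α] (A B : Finset α) (u v : α) :
    mutantNext (A ∪ B) u v = mutantNext A u v ∪ mutantNext B u v := by
  unfold mutantNext
  by_cases hA : u ∈ A <;> by_cases hB : u ∈ B <;> simp [hA, hB]

namespace FitnessGraph

variable (G : FitnessGraph V)

lemma fit_pos (X : Finset V) (u : V) : 0 < G.fit X u := by
  unfold fit; split
  exacts [G.m_pos u, G.r_pos u]

lemma totalFit_pos [Nonempty V] (X : Finset V) : 0 < G.totalFit X :=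
  sum_pos (fun u _ => G.fit_pos X u) univ_nonempty

lemma sum_step_mul (X : Finset V) (φ : Finset V → ℝ) :
    ∑ Y, G.step X Y * φ Y =
      (∑ u, ∑ v, G.fit X u * G.w u v * φ (moranNext X u v)) / G.totalFit X := by
  simp only [step, sum_mul, mul_ite, mul_one, mul_zero, ite_mul, zero_mul, sum_div]
  rw [sum_comm]
  refine sum_congr rfl fun u _ => ?_
  rw [sum_comm]
  refine sum_congr rfl fun v _ => ?_
  rw [sum_ite_eq]
  simp only [mem_univ, if_true]
  ring

noncomputable def transitionMatrix : Matrix (Finset V) (Finset V) ℝ := Matrix.of G.step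

lemma transitionMatrix_mem_rowStochastic [Nonempty V] :
    G.transitionMatrix ∈ Matrix.rowStochastic ℝ (Finset V) := by
  refine Matrix.mem_rowStochastic_iff_sum.2 ⟨fun X Y => ?_, fun X => ?_⟩
  · exact sum_nonneg fun u _ => sum_nonneg fun v _ => mul_nonneg (mul_nonneg
      (div_nonneg (G.fit_pos X u).le (G.totalFit_pos X).le) (G.w_nonneg u v))
      (by split_ifs <;> norm_num)
  · have h := G.sum_step_mul X 1
    simp only [Pi.one_apply, mul_one, ← mul_sum, G.w_rowsum] at h
    simp only [transitionMatrix, Matrix.of_apply, h]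
    exact div_self (G.totalFit_pos X).ne'

lemma stepN_eq_pow (t : ℕ) (X Y : Finset V) :
    G.stepN t X Y = (G.transitionMatrix ^ t) X Y := by
  induction t generalizing Y with
  | zero => simp [stepN, Matrix.one_apply]
  | succ t ih => simp [stepN, pow_succ, Matrix.mul_apply, ih, transitionMatrix]

lemma transitionMatrix_row_of_absorbing [Nonempty V] {X : Finset V}
    (hX : ∀ u v, moranNext X u v = X) :
    G.transitionMatrix X = (1 : Matrix (Finset V) (Finset V) ℝ) X := by
  funext Y
  have h := G.sum_step_mul X fun Z => if Z = Y then 1 else 0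
  simp only [mul_ite, mul_one, mul_zero, sum_ite_eq', mem_univ, if_true, hX] at h
  rw [transitionMatrix, Matrix.of_apply, h, Matrix.one_apply]
  split_ifs
  · simp only [mul_one, ← mul_sum, G.w_rowsum]
    exact div_self (G.totalFit_pos X).ne'
  · simp

lemma fp_of_absorbing [Nonempty V] {X : Finset V} (hX : ∀ u v, moranNext X u v = X) :
    G.fp X = if X = univ then 1 else 0 := by
  have hrow := Matrix.pow_row_eq_one_row (G.transitionMatrix_row_of_absorbing hX)
  simp only [fp, stepN_eq_pow, fun t => congrFun (hrow t) univ, ciSup_const, Matrix.one_apply]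

lemma fp_empty [Nonempty V] : G.fp ∅ = 0 := by
  rw [G.fp_of_absorbing fun u v => by simp [moranNext], if_neg univ_nonempty.ne_empty.symm]

lemma fp_univ [Nonempty V] : G.fp univ = 1 := by
  rw [G.fp_of_absorbing fun u v => by simp [moranNext], if_pos rfl]

lemma tendsto_pow_apply_univ [Nonempty V] (X : Finset V) :
    Tendsto (fun t => (G.transitionMatrix ^ t) X univ) atTop (𝓝 (G.fp X)) := by
  have hP := G.transitionMatrix_mem_rowStochastic
  have hmono : Monotone fun t => (G.transitionMatrix ^ t) X univ := by
    refine monotone_nat_of_le_succ fun t => ?_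
    rw [pow_succ, Matrix.mul_apply]
    calc (G.transitionMatrix ^ t) X univ
        = (G.transitionMatrix ^ t) X univ * G.transitionMatrix univ univ := by
          rw [G.transitionMatrix_row_of_absorbing fun u v => by simp [moranNext]]
          simp
      _ ≤ _ := single_le_sum
          (f := fun Z => (G.transitionMatrix ^ t) X Z * G.transitionMatrix Z univ)
          (fun Z _ => mul_nonneg (Matrix.nonneg_of_mem_rowStochastic (pow_mem hP t))
            (Matrix.nonneg_of_mem_rowStochastic hP)) (mem_univ _)
  have hbdd : BddAbove (Set.range fun t => (G.transitionMatrix ^ t) X univ) :=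
    ⟨1, Set.forall_mem_range.2 fun t => Matrix.le_one_of_mem_rowStochastic (pow_mem hP t)⟩
  simpa [fp, stepN_eq_pow] using tendsto_atTop_ciSup hmono hbdd

lemma fp_le_one [Nonempty V] (X : Finset V) : G.fp X ≤ 1 :=
  le_of_tendsto' (G.tendsto_pow_apply_univ X) fun t =>
    Matrix.le_one_of_mem_rowStochastic (pow_mem G.transitionMatrix_mem_rowStochastic t)

lemma fp_eq_sum_step_mul [Nonempty V] (X : Finset V) :
    G.fp X = ∑ Y, G.step X Y * G.fp Y := by
  have hsucc := (G.tendsto_pow_apply_univ X).comp (tendsto_add_atTop_nat 1)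
  have hlim : Tendsto (fun t => ∑ Y, G.step X Y * (G.transitionMatrix ^ t) Y univ) atTop
      (𝓝 (∑ Y, G.step X Y * G.fp Y)) :=
    tendsto_finsetSum _ fun Y _ => (G.tendsto_pow_apply_univ Y).const_mul _
  refine tendsto_nhds_unique hsucc (hlim.congr fun t => ?_)
  simp [pow_succ', Matrix.mul_apply, transitionMatrix]

/-- One step of the Moran process uniformized to rate `m u` at every node `u`: at rate `r u` the
node reproduces as in the Moran process, at the remaining rate `m u - r u` only if it is a
mutant. -/
noncomputable def lazyAvg (φ : Finset V → ℝ) (X : Finset V) : ℝ :=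
  (∑ u, ∑ v, G.w u v * (G.r u * φ (moranNext X u v) + (G.m u - G.r u) * φ (mutantNext X u v)))
    / ∑ u, G.m u

lemma sum_m_pos [Nonempty V] : 0 < ∑ u, G.m u :=
  sum_pos (fun u _ => G.m_pos u) univ_nonempty

lemma lazyAvg_monotone {G : FitnessGraph V} (hb : G.MutantBiased) : Monotone G.lazyAvg :=
  fun _ _ h _ => div_le_div_of_nonneg_right
    (sum_le_sum fun u _ => sum_le_sum fun v _ => mul_le_mul_of_nonneg_left
      (add_le_add (mul_le_mul_of_nonneg_left (h _) (G.r_pos u).le)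
        (mul_le_mul_of_nonneg_left (h _) (sub_nonneg.2 (hb u))))
      (G.w_nonneg u v))
    (sum_nonneg fun u _ => (G.m_pos u).le)

lemma lazyAvg_const [Nonempty V] (c : ℝ) (X : Finset V) : G.lazyAvg (fun _ => c) X = c := by
  simp only [lazyAvg, ← add_mul, add_sub_cancel, ← sum_mul, ← mul_assoc, G.w_rowsum, one_mul]
  exact mul_div_cancel_left₀ c G.sum_m_pos.ne'

lemma lazyAvg_empty [Nonempty V] (φ : Finset V → ℝ) : G.lazyAvg φ ∅ = φ ∅ := by
  simpa [lazyAvg, moranNext, mutantNext] using G.lazyAvg_const (φ ∅) ∅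

lemma lazyAvg_univ [Nonempty V] (φ : Finset V → ℝ) : G.lazyAvg φ univ = φ univ := by
  simpa [lazyAvg, moranNext, mutantNext] using G.lazyAvg_const (φ univ) univ

lemma lazyAvg_sub (φ ψ : Finset V → ℝ) :
    G.lazyAvg (φ - ψ) = G.lazyAvg φ - G.lazyAvg ψ := by
  funext X
  simp only [lazyAvg, Pi.sub_apply, ← sub_div, ← sum_sub_distrib]
  congr 1
  refine sum_congr rfl fun u _ => sum_congr rfl fun v _ => by ring

lemma continuous_lazyAvg : Continuous G.lazyAvg := by
  refine continuous_pi fun X => ?_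
  unfold lazyAvg
  fun_prop

lemma sum_w_mul_lazy_eq (φ : Finset V → ℝ) (X : Finset V) (u : V) :
    ∑ v, G.w u v * (G.r u * φ (moranNext X u v) + (G.m u - G.r u) * φ (mutantNext X u v)) =
      ∑ v, G.fit X u * G.w u v * φ (moranNext X u v) + (G.m u - G.fit X u) * φ X := by
  by_cases hu : u ∈ X
  · simp only [fit, moranNext, mutantNext, hu, if_true, sub_self, zero_mul, add_zero]
    exact sum_congr rfl fun v _ => by ring
  · simp only [fit, moranNext, mutantNext, hu, if_false, mul_add, sum_add_distrib, ← sum_mul,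
      G.w_rowsum, one_mul]
    congr 1
    exact sum_congr rfl fun v _ => by ring

lemma lazyAvg_fp [Nonempty V] : G.lazyAvg G.fp = G.fp := by
  funext X
  have h := G.fp_eq_sum_step_mul X
  rw [sum_step_mul, eq_div_iff (G.totalFit_pos X).ne'] at h
  rw [lazyAvg, div_eq_iff G.sum_m_pos.ne']
  simp only [sum_w_mul_lazy_eq, sum_add_distrib, ← sum_mul, sum_sub_distrib, ← h]
  unfold totalFit
  ring

lemma lazyAvg_lt {G : FitnessGraph V} [Nonempty V] (hb : G.MutantBiased) {δ : Finset V → ℝ}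
    {M : ℝ} (hδ : ∀ Y, δ Y ≤ M) {X : Finset V} {u v : V} (hu : u ∈ X) (hw : 0 < G.w u v)
    (hv : δ (insert v X) < M) : G.lazyAvg δ X < M := by
  conv_rhs => rw [← G.lazyAvg_const M X]
  refine div_lt_div_of_pos_right ?_ G.sum_m_pos
  have hterm : ∀ u' v', G.w u' v' * (G.r u' * δ (moranNext X u' v') +
      (G.m u' - G.r u') * δ (mutantNext X u' v')) ≤
      G.w u' v' * (G.r u' * M + (G.m u' - G.r u') * M) := fun u' v' =>
    mul_le_mul_of_nonneg_left (add_le_add (mul_le_mul_of_nonneg_left (hδ _) (G.r_pos u').le)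
      (mul_le_mul_of_nonneg_left (hδ _) (sub_nonneg.2 (hb u')))) (G.w_nonneg u' v')
  have hstrict : G.w u v * (G.r u * δ (moranNext X u v) +
      (G.m u - G.r u) * δ (mutantNext X u v)) <
      G.w u v * (G.r u * M + (G.m u - G.r u) * M) := by
    simp only [moranNext, mutantNext, hu, if_true]
    exact mul_lt_mul_of_pos_left (add_lt_add_of_lt_of_le (mul_lt_mul_of_pos_left hv (G.r_pos u))
      (mul_le_mul_of_nonneg_left hv.le (sub_nonneg.2 (hb u)))) hw
  exact sum_lt_sum (fun u' _ => sum_le_sum fun v' _ => hterm u' v')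
    ⟨u, mem_univ u, sum_lt_sum (fun v' _ => hterm u v') ⟨v, mem_univ v, hstrict⟩⟩

lemma exists_edge_out {X : Finset V} (hne : X.Nonempty) (hX : X ≠ univ) :
    ∃ u ∈ X, ∃ v ∉ X, 0 < G.w u v := by
  obtain ⟨a, ha⟩ := hne
  obtain ⟨b, hbX⟩ : ∃ b, b ∉ X := by simpa [eq_univ_iff_forall] using hX
  induction G.strongly_connected a b with
  | refl => exact absurd ha hbX
  | @tail c d _ hcd ih =>
    by_cases hc : c ∈ X
    · exact ⟨c, hc, d, hbX, hcd⟩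
    · exact ih hc

lemma le_max_of_lazyAvg_eq {G : FitnessGraph V} [Nonempty V] (hb : G.MutantBiased)
    {δ : Finset V → ℝ} (hδ : G.lazyAvg δ = δ) (X : Finset V) :
    δ X ≤ max (δ ∅) (δ univ) := by
  obtain ⟨X₀, -, hX₀⟩ := exists_max_image univ δ univ_nonempty
  obtain ⟨Y, hY, hYcard⟩ := exists_max_image (univ.filter fun Y => δ Y = δ X₀) card
    ⟨X₀, by simp⟩
  have hYtop : δ Y = δ X₀ := (mem_filter.1 hY).2
  have hle : ∀ Z, δ Z ≤ δ Y := fun Z => hYtop ▸ hX₀ Z (mem_univ Z)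
  refine (hle X).trans ?_
  rcases Y.eq_empty_or_nonempty with rfl | hne
  · exact le_max_left _ _
  by_cases hU : Y = univ
  · exact hU ▸ le_max_right _ _
  obtain ⟨u, hu, v, hv, hw⟩ := G.exists_edge_out hne hU
  have hlt : δ (insert v Y) < δ Y := by
    refine (hle _).lt_of_ne fun heq => ?_
    have := hYcard (insert v Y) (mem_filter.2 ⟨mem_univ _, heq.trans hYtop⟩)
    rw [card_insert_of_notMem hv] at this
    omega
  simpa [hδ] using G.lazyAvg_lt hb hle hu hw hlt

/-- Value iteration from above. It has to start at `0` on `∅`: that configuration is absorbing,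
so every iterate keeps its initial value there. -/
noncomputable def lazyIter (t : ℕ) : Finset V → ℝ :=
  G.lazyAvg^[t] fun X => if X = ∅ then 0 else 1

lemma lazyIter_succ (t : ℕ) : G.lazyIter (t + 1) = G.lazyAvg (G.lazyIter t) :=
  Function.iterate_succ_apply' _ _ _

lemma lazyIter_empty [Nonempty V] (t : ℕ) : G.lazyIter t ∅ = 0 := by
  induction t with
  | zero => simp [lazyIter]
  | succ t ih => rw [lazyIter_succ, lazyAvg_empty, ih]

lemma lazyIter_univ [Nonempty V] (t : ℕ) : G.lazyIter t univ = 1 := by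
  induction t with
  | zero => simp [lazyIter, univ_nonempty.ne_empty]
  | succ t ih => rw [lazyIter_succ, lazyAvg_univ, ih]

lemma fp_le_lazyIter {G : FitnessGraph V} [Nonempty V] (hb : G.MutantBiased) (t : ℕ) :
    G.fp ≤ G.lazyIter t := by
  rw [← Function.iterate_fixed G.lazyAvg_fp t]
  refine (G.lazyAvg_monotone hb).iterate t fun X => ?_
  split_ifs with hX
  · rw [hX, fp_empty]
  · exact G.fp_le_one X

lemma antitone_lazyIter {G : FitnessGraph V} [Nonempty V] (hb : G.MutantBiased) :
    Antitone G.lazyIter := by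
  refine (G.lazyAvg_monotone hb).antitone_iterate_of_map_le fun X => ?_
  split_ifs with hX
  · rw [hX, lazyAvg_empty, if_pos rfl]
  · calc _ ≤ G.lazyAvg (fun _ => 1) X :=
          G.lazyAvg_monotone hb (fun Y => by split_ifs <;> norm_num) X
      _ = 1 := G.lazyAvg_const 1 X

lemma tendsto_lazyIter {G : FitnessGraph V} [Nonempty V] (hb : G.MutantBiased) :
    Tendsto G.lazyIter atTop (𝓝 G.fp) := by
  have hlim := tendsto_atTop_ciInf (antitone_lazyIter hb)
    ⟨G.fp, Set.forall_mem_range.2 (fp_le_lazyIter hb)⟩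
  set L := ⨅ t, G.lazyIter t
  have hfix : G.lazyAvg L = L := by
    refine tendsto_nhds_unique (G.continuous_lazyAvg.tendsto L |>.comp hlim) ?_
    simpa only [Function.comp_def, lazyIter_succ] using hlim.comp (tendsto_add_atTop_nat 1)
  have hempty : L ∅ = 0 :=
    tendsto_nhds_unique (tendsto_pi_nhds.1 hlim ∅) (by simp [lazyIter_empty])
  have huniv : L univ = 1 :=
    tendsto_nhds_unique (tendsto_pi_nhds.1 hlim univ) (by simp [lazyIter_univ])
  suffices L = G.fp by rwa [this] at hlim
  refine le_antisymm (fun X => ?_) (le_ciInf (fp_le_lazyIter hb))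
  have := le_max_of_lazyAvg_eq hb (δ := L - G.fp) (by rw [lazyAvg_sub, hfix, lazyAvg_fp]) X
  simp only [Pi.sub_apply, hempty, huniv, fp_empty, fp_univ, sub_self, max_self] at this
  linarith

lemma submodularBelow_lazyAvg {G : FitnessGraph V} (hb : G.MutantBiased)
    {φ ψ : Finset V → ℝ} (h : SubmodularBelow φ ψ) :
    SubmodularBelow (G.lazyAvg φ) (G.lazyAvg ψ) := by
  intro A B I hI
  have hmoran u v :=
    h.comp (N := fun X => moranNext X u v) (fun A B => moranNext_union A B u v) hI
  have hmutant u v :=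
    h.comp (N := fun X => mutantNext X u v) (fun A B => mutantNext_union A B u v) hI
  simp only [lazyAvg, ← add_div, ← sum_add_distrib]
  refine div_le_div_of_nonneg_right (sum_le_sum fun u _ => sum_le_sum fun v _ => ?_)
    (sum_nonneg fun u _ => (G.m_pos u).le)
  rw [← mul_add, ← mul_add]
  refine mul_le_mul_of_nonneg_left ?_ (G.w_nonneg u v)
  calc _ = G.r u * (φ (moranNext (A ∪ B) u v) + φ (moranNext I u v)) +
        (G.m u - G.r u) * (φ (mutantNext (A ∪ B) u v) + φ (mutantNext I u v)) := by ring
    _ ≤ G.r u * (ψ (moranNext A u v) + ψ (moranNext B u v)) +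
        (G.m u - G.r u) * (ψ (mutantNext A u v) + ψ (mutantNext B u v)) :=
      add_le_add (mul_le_mul_of_nonneg_left (hmoran u v) (G.r_pos u).le)
        (mul_le_mul_of_nonneg_left (hmutant u v) (sub_nonneg.2 (hb u)))
    _ = _ := by ring

lemma submodularBelow_fp_lazyIter {G : FitnessGraph V} [Nonempty V] (hb : G.MutantBiased)
    (t : ℕ) : SubmodularBelow G.fp (G.lazyIter t) := by
  induction t with
  | zero =>
    intro A B I hI
    have hfp := fp_le_lazyIter hb 0
    rcases A.eq_empty_or_nonempty with rfl | hA
    · rw [subset_empty.1 (show I ⊆ ∅ by simpa using hI), empty_union, fp_empty, lazyIter_empty]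
      linarith [hfp B]
    rcases B.eq_empty_or_nonempty with rfl | hB
    · rw [subset_empty.1 (show I ⊆ ∅ by simpa using hI), union_empty, fp_empty, lazyIter_empty]
      linarith [hfp A]
    simp only [lazyIter, Function.iterate_zero, id, if_neg hA.ne_empty, if_neg hB.ne_empty]
    linarith [G.fp_le_one (A ∪ B), G.fp_le_one I]
  | succ t ih =>
    rw [lazyIter_succ, ← G.lazyAvg_fp]
    exact submodularBelow_lazyAvg hb ih

lemma submodularBelow_fp {G : FitnessGraph V} [Nonempty V] (hb : G.MutantBiased) :
    SubmodularBelow G.fp G.fp := fun A B _ hI =>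
  ge_of_tendsto' ((tendsto_pi_nhds.1 (tendsto_lazyIter hb) A).add
    (tendsto_pi_nhds.1 (tendsto_lazyIter hb) B)) fun t => submodularBelow_fp_lazyIter hb t hI

end FitnessGraph

/-- Greedy seed selection on a mutant-biased fitness graph: the greedy algorithm,
which starts from `S 0 = ∅` and at each of `k` steps adds a node maximizing the
fixation probability, returns a seed set `S k` whose fixation probability is at
least `(1 - 1/e)` times the maximum fixation probability over all seed sets of
size at most `k`. -/
theorem greedy_approximation (G : FitnessGraph V) (hbias : G.MutantBiased)
    (k : ℕ) (hk : 1 ≤ k) (S : ℕ → Finset V) (hS0 : S 0 = ∅)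
    (hgreedy : ∀ i < k, ∃ u : V,
      (∀ v : V, G.fp (insert v (S i)) ≤ G.fp (insert u (S i))) ∧
      S (i + 1) = insert u (S i)) :
    (1 - 1 / Real.exp 1) *
        ((Finset.univ.powerset.filter fun T : Finset V => T.card ≤ k).sup'
          ⟨∅, by simp⟩ fun T => G.fp T) ≤
      G.fp (S k) := by
  have : Nonempty V := ⟨(hgreedy 0 hk).choose⟩
  obtain ⟨T, hT, hmax⟩ := exists_mem_eq_sup'
    (s := univ.powerset.filter fun T : Finset V => T.card ≤ k) ⟨∅, by simp⟩ G.fp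
  rw [hmax]
  have hsub := FitnessGraph.submodularBelow_fp hbias
  simpa [FitnessGraph.fp_empty] using
    greedy_approx_of_monotone_submodular hsub.monotone hsub.union_add_inter_le hk hS0 hgreedy
      (mem_filter.1 hT).2
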